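/- If a set of agents {a_k, ..., a_l} is in a deadlock (all requesting, with head(k)=tail(k+1), ..., head(l)=tail(k) forming a cycle), then no agent in the deadlock can transition from requesting to extended, since every head of a deadlocked agent is occupied. -/

import Mathlib

inductive Mode where
  | contracted | requesting | extended
deriving DecidableEq

structure Config (A V : Type*) where
  mode : A → Mode
  tail : A → V
  head : A → Option V

def occupied {A V : Type*} (c : Config A V) (v : V) : Prop :=
  (∃ j, c.tail j = v) ∨ (∃ j, c.mode j = Mode.extended ∧ c.head j = some v)

inductive Step {A V : Type*} (adj : V → V → Prop) : Config A V → Config A V → Prop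
  | toRequesting (c c' : Config A V) (i : A) (u : V) :
      c.mode i = Mode.contracted → adj (c.tail i) u →
      c'.mode i = Mode.requesting → c'.head i = some u → c'.tail i = c.tail i →
      (∀ j, j ≠ i → c'.mode j = c.mode j ∧ c'.tail j = c.tail j ∧ c'.head j = c.head j) →
      Step adj c c'
  | backToContracted (c c' : Config A V) (i : A) :
      c.mode i = Mode.requesting →
      c'.mode i = Mode.contracted → c'.head i = none → c'.tail i = c.tail i →
      (∀ j, j ≠ i → c'.mode j = c.mode j ∧ c'.tail j = c.tail j ∧ c'.head j = c.head j) →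
      Step adj c c'
  | toExtended (c c' : Config A V) (i : A) (u : V) :
      c.mode i = Mode.requesting → c.head i = some u → ¬ occupied c u →
      c'.mode i = Mode.extended → c'.head i = some u → c'.tail i = c.tail i →
      (∀ j, j ≠ i → c'.mode j = c.mode j ∧ c'.tail j = c.tail j ∧ c'.head j = c.head j) →
      Step adj c c'
  | finishMove (c c' : Config A V) (i : A) (u : V) :
      c.mode i = Mode.extended → c.head i = some u →
      c'.mode i = Mode.contracted → c'.head i = none → c'.tail i = u →
      (∀ j, j ≠ i → c'.mode j = c.mode j ∧ c'.tail j = c.tail j ∧ c'.head j = c.head j) →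
      Step adj c c'

theorem occupied_tail {A V : Type*} (c : Config A V) (j : A) : occupied c (c.tail j) :=
  Or.inl ⟨j, rfl⟩

theorem Step.head_unoccupied_of_requesting_of_extended {A V : Type*} {adj : V → V → Prop}
    {c c' : Config A V} (hstep : Step adj c c') {i : A} (hreq : c.mode i = Mode.requesting)
    (hext : c'.mode i = Mode.extended) : ∃ u, c.head i = some u ∧ ¬ occupied c u := by
  cases hstep with
  | toRequesting j _ _ _ hmode _ _ hframe =>
    by_cases hij : i = j
    · subst hij; simp [hmode] at hext
    · simp [(hframe i hij).1, hreq] at hext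
  | backToContracted j _ hmode _ _ hframe =>
    by_cases hij : i = j
    · subst hij; simp [hmode] at hext
    · simp [(hframe i hij).1, hreq] at hext
  | toExtended j u _ hhead hfree _ _ _ hframe =>
    by_cases hij : i = j
    · exact ⟨u, hij ▸ hhead, hfree⟩
    · simp [(hframe i hij).1, hreq] at hext
  | finishMove j _ hmode _ _ _ _ hframe =>
    by_cases hij : i = j
    · subst hij; simp [hmode] at hreq
    · simp [(hframe i hij).1, hreq] at hext

theorem deadlock_blocks_extension_general
    {A V : Type*} (adj : V → V → Prop) (c : Config A V)
    {n : ℕ} [NeZero n] (f : Fin n → A)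
    (hreq : ∀ k : Fin n, c.mode (f k) = Mode.requesting)
    (hcycle : ∀ k : Fin n, c.head (f k) = some (c.tail (f (k + 1)))) :
    (∀ (k : Fin n) (u : V), c.head (f k) = some u → occupied c u) ∧
    (∀ (k : Fin n) (c' : Config A V), Step adj c c' →
        c'.mode (f k) ≠ Mode.extended) := by
  have hocc : ∀ (k : Fin n) (u : V), c.head (f k) = some u → occupied c u := by
    intro k u hu
    rw [hcycle k, Option.some_inj] at hu
    exact hu ▸ occupied_tail c (f (k + 1))
  refine ⟨hocc, fun k c' hstep hext => ?_⟩
  obtain ⟨u, hu, hfree⟩ := hstep.head_unoccupied_of_requesting_of_extended (hreq k) hext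
  exact hfree (hocc k u hu)

/-- If a set of agents `f 0, …, f (n-1)` is in a deadlock — all requesting, with
`head (f k) = tail (f (k+1))` cyclically — then the head of every deadlocked
agent is occupied, and consequently no deadlocked agent can transition from
requesting to extended in a single step. -/
theorem deadlock_blocks_extension
    {A V : Type*} (adj : V → V → Prop) (c : Config A V)
    {n : ℕ} [NeZero n] (f : Fin n → A) (hinj : Function.Injective f)
    (hreq : ∀ k : Fin n, c.mode (f k) = Mode.requesting)
    (hcycle : ∀ k : Fin n, c.head (f k) = some (c.tail (f (k + 1)))) :
    (∀ (k : Fin n) (u : V), c.head (f k) = some u → occupied c u) ∧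
    (∀ (k : Fin n) (c' : Config A V), Step adj c c' →
        c'.mode (f k) ≠ Mode.extended) :=
  deadlock_blocks_extension_general adj c f hreq hcycle
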